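/- For every odd natural number m and every natural number n, L(m) · ∑_{k=0}^{n} F(mk)² = F(m(n+1)) · F(mn), where the identity is read in the integers. -/
import Mathlib


def F : ℕ → ℤ
  | 0 => 0
  | 1 => 1
  | (n + 2) => F (n + 1) + F n

def L : ℕ → ℤ
  | 0 => 2
  | 1 => 1
  | (n + 2) => L (n + 1) + L n

lemma F_add : ∀ a b : ℕ, F (a + b + 1) = F a * F b + F (a + 1) * F (b + 1) := by
  intro a
  induction a using Nat.twoStepInduction with
  | zero => intro b; simp [F]
  | one =>
    intro b
    have : F (1 + b + 1) = F (b + 1) + F b := by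
      rw [show 1 + b + 1 = b + 2 by omega, F]
    rw [this]
    simp [F]; ring
  | more a ih1 ih2 =>
    intro b
    have hstep : F (a + 2 + b + 1) = F (a + 1 + b + 1) + F (a + b + 1) := by
      rw [show a + 2 + b + 1 = (a + b + 1) + 2 by omega, F,
        show a + b + 1 + 1 = a + 1 + b + 1 by omega]
    have eA : F (a + 2) = F (a + 1) + F a := by rw [F]
    have eB : F (a + 2 + 1) = F (a + 2) + F (a + 1) := by
      rw [show a + 2 + 1 = (a + 1) + 2 by omega, F, show a + 1 + 1 = a + 2 by omega]
    have e2 : F (a + 1 + 1) = F (a + 2) := by rw [show a + 1 + 1 = a + 2 by omega]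
    rw [hstep, ih1 b, ih2 b, e2, eB, eA]
    ring

lemma cassini : ∀ j : ℕ, F (j + 1) * F (j + 1) - F (j + 2) * F j = (-1 : ℤ) ^ j := by
  intro j
  induction j with
  | zero => simp [F]
  | succ j ih =>
    have e1 : F (j + 2) = F (j + 1) + F j := by rw [F]
    have e2 : F (j + 3) = F (j + 2) + F (j + 1) := by
      rw [show j + 3 = (j + 1) + 2 by omega, F, show j + 1 + 1 = j + 2 by omega]
    rw [show j + 1 + 2 = j + 3 by omega, show j + 1 + 1 = j + 2 by omega, pow_succ]
    linear_combination (-1 : ℤ) * ih - F (j + 1) * e2 + F (j + 2) * e1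

lemma L_eq : ∀ j : ℕ, L (j + 1) = F j + F (j + 2) := by
  intro j
  induction j using Nat.twoStepInduction with
  | zero => simp [F, L]
  | one => simp [F, L]
  | more j ih1 ih2 =>
    rw [show j + 2 + 1 = (j + 1) + 2 by rfl, L, ih1, ih2]
    have f1 : F (j + 2 + 2) = F (j + 2 + 1) + F (j + 2) := by rw [F]
    have f2 : F (j + 2 + 1) = F (j + 1 + 1) + F (j + 1) := by
      rw [show j + 2 + 1 = (j + 1) + 2 by omega, F]
    have f3 : F (j + 2) = F (j + 1) + F j := by rw [F]
    rw [f1, f2]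
    linarith [f3]

lemma key (m : ℕ) (hm : Odd m) (a : ℕ) :
    F (a + 2 * m) = L m * F (a + m) + F a := by
  obtain ⟨k, rfl⟩ := hm
  set j := 2 * k with hj
  have hjE : (-1 : ℤ) ^ j = 1 := by simp [hj, pow_mul]
  have hcas : F (j + 1) * F (j + 1) = F (j + 2) * F j + 1 := by
    have := cassini j; rw [hjE] at this; linarith
  have hL : L (j + 1) = F j + F (j + 2) := L_eq j
  have h1 : F (a + (j + 1)) = F a * F j + F (a + 1) * F (j + 1) := by
    rw [show a + (j + 1) = a + j + 1 by omega, F_add]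
  have h2m1 : F (2 * j + 1) = F j * F j + F (j + 1) * F (j + 1) := by
    rw [show 2 * j + 1 = j + j + 1 by omega, F_add]
  have h2m : F (2 * j + 2) = F (j + 1) * F j + F (j + 2) * F (j + 1) := by
    rw [show 2 * j + 2 = (j + 1) + j + 1 by omega, F_add, show j + 1 + 1 = j + 2 by omega]
  have h2 : F (a + 2 * (j + 1)) = F a * F (2 * j + 1) + F (a + 1) * F (2 * j + 2) := by
    rw [show a + 2 * (j + 1) = a + (2 * j + 1) + 1 by omega, F_add,
      show 2 * j + 1 + 1 = 2 * j + 2 by omega]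
  rw [show 2 * k + 1 = j + 1 from rfl, h2, h2m1, h2m, hL, h1]
  linear_combination F a * hcas

theorem fib_square_msection_sum (m : ℕ) (hm : Odd m) (n : ℕ) :
    L m * ∑ k ∈ Finset.range (n + 1), F (m * k) ^ 2 =
      F (m * (n + 1)) * F (m * n) := by
  induction n with
  | zero => simp [F]
  | succ n ih =>
    rw [Finset.sum_range_succ, mul_add, ih]
    have hk := key m hm (m * n)
    rw [show m * n + 2 * m = m * (n + 2) by ring, show m * n + m = m * (n + 1) by ring] at hk
    rw [show n + 1 + 1 = n + 2 by rfl, hk]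
    ring
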